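/- Let n ≥ 1 and let U be an invertible n × n matrix over 𝔽₂ = ZMod 2 with F := U⁻¹. Define U(i) := {k : U_{k,i} = 1}, F(i) := {k : F_{i,k} = 1}, P(i) := F(0) △ ⋯ △ F(i−1), and R(i) := P(i) △ F(i). Then for every i ∈ {0,…,n−1}: |U(i) ∩ P(i)| is even and |U(i) ∩ R(i)| is odd. Consequently, the n-qubit Pauli strings satisfy X_{U(i)} Z_{P(i)} = Z_{P(i)} X_{U(i)} and X_{U(i)} Z_{R(i)} = − Z_{R(i)} X_{U(i)}. -/

import Mathlib

/-!
Over `𝔽₂`, the parity of `|U(i) ∩ F(j)|` is the entry `(F U)_{j i} = δ_{j i}`, and the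
cardinality of a symmetric difference is additive mod 2; hence `|U(i) ∩ P(m)| ≡ [i < m]`, which
is even for `m = i` and odd for `m = i + 1`, where `P(i + 1) = R(i)`. On the Pauli side,
`Z_T X_S = (-1)^|S ∩ T| X_S Z_T`, since `Z` and `X` anticommute on every qubit of `S ∩ T` and
commute on all others.
-/

open Matrix Finset
open scoped symmDiff

namespace FQ

/-- Pauli X. -/
noncomputable def X : Matrix (ZMod 2) (ZMod 2) ℂ := !![0, 1; 1, 0]

/-- Pauli Y. -/
noncomputable def Y : Matrix (ZMod 2) (ZMod 2) ℂ := !![0, -Complex.I; Complex.I, 0]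

/-- Pauli Z. -/
noncomputable def Z : Matrix (ZMod 2) (ZMod 2) ℂ := !![1, 0; 0, -1]

/-- Tensor product `M 0 ⊗ M 1 ⊗ ⋯ ⊗ M (n-1)` of a family of single-qubit operators, as a
`2^n × 2^n` matrix indexed by functions `Fin n → ZMod 2`
(the identification of `(ℂ²)^⊗n` with `ℂ^(2^n)`). -/
noncomputable def tens {n : ℕ} (M : Fin n → Matrix (ZMod 2) (ZMod 2) ℂ) :
    Matrix (Fin n → ZMod 2) (Fin n → ZMod 2) ℂ :=
  Matrix.of fun f g => ∏ i, M i (f i) (g i)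

/-- The Pauli string `X_S`: Pauli `X` on each tensor factor in `S`, identity elsewhere. -/
noncomputable def Xstr {n : ℕ} (S : Finset (Fin n)) :
    Matrix (Fin n → ZMod 2) (Fin n → ZMod 2) ℂ :=
  tens fun j => if j ∈ S then X else 1

/-- The Pauli string `Y_S`: Pauli `Y` on each tensor factor in `S`, identity elsewhere. -/
noncomputable def Ystr {n : ℕ} (S : Finset (Fin n)) :
    Matrix (Fin n → ZMod 2) (Fin n → ZMod 2) ℂ :=
  tens fun j => if j ∈ S then Y else 1

/-- The Pauli string `Z_S`: Pauli `Z` on each tensor factor in `S`, identity elsewhere. -/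
noncomputable def Zstr {n : ℕ} (S : Finset (Fin n)) :
    Matrix (Fin n → ZMod 2) (Fin n → ZMod 2) ℂ :=
  tens fun j => if j ∈ S then Z else 1

/-- The `2^n × 2^n` permutation matrix `m_U` of the linear encoding determined by
`U ∈ GL_n(𝔽₂)`, sending the basis vector `e_f` to `e_{U f}`. -/
noncomputable def encMat {n : ℕ} (U : Matrix (Fin n) (Fin n) (ZMod 2)) :
    Matrix (Fin n → ZMod 2) (Fin n → ZMod 2) ℂ :=
  Matrix.of fun g f => if g = U.mulVec f then 1 else 0

/-- `U(i) = {k : U_{k,i} = 1}`, the set of row indices of nonzero elements of the `i`-th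
column of `U`. -/
def colSet {n : ℕ} (U : Matrix (Fin n) (Fin n) (ZMod 2)) (i : Fin n) : Finset (Fin n) :=
  Finset.univ.filter fun k => U k i = 1

/-- `F(i) = {k : F_{i,k} = 1}`, the set of column indices of nonzero elements of the `i`-th
row of `F`. -/
def rowSet {n : ℕ} (F : Matrix (Fin n) (Fin n) (ZMod 2)) (i : Fin n) : Finset (Fin n) :=
  Finset.univ.filter fun k => F i k = 1

/-- `rowSet` with a natural-number index (junk value `∅` out of range). -/
def rowSetN {n : ℕ} (F : Matrix (Fin n) (Fin n) (ZMod 2)) (i : ℕ) : Finset (Fin n) :=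
  if h : i < n then rowSet F ⟨i, h⟩ else ∅

/-- `P(i) = F(0) △ F(1) △ ⋯ △ F(i−1)`, the iterated symmetric difference of the rows of `F`. -/
def Pset {n : ℕ} (F : Matrix (Fin n) (Fin n) (ZMod 2)) : ℕ → Finset (Fin n)
  | 0 => ∅
  | i + 1 => Pset F i ∆ rowSetN F i

/-- `R(i) = P(i) △ F(i)`. -/
def Rset {n : ℕ} (F : Matrix (Fin n) (Fin n) (ZMod 2)) (i : ℕ) : Finset (Fin n) :=
  Pset F i ∆ rowSetN F i

section PauliStrings

variable {n : ℕ}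

theorem Z_mul_X : Z * X = -(X * Z) := by
  ext a b
  rw [Matrix.mul_apply, Matrix.neg_apply, Matrix.mul_apply]
  fin_cases a <;> fin_cases b <;> simp [X, Z, Fin.sum_univ_two, ZMod]

theorem tens_mul (M N : Fin n → Matrix (ZMod 2) (ZMod 2) ℂ) :
    tens M * tens N = tens fun i => M i * N i := by
  ext f g
  simp only [tens, Matrix.mul_apply, Matrix.of_apply, ← Finset.prod_mul_distrib]
  exact (Fintype.prod_sum fun i a => M i (f i) a * N i a (g i)).symm

theorem tens_smul (c : Fin n → ℂ) (M : Fin n → Matrix (ZMod 2) (ZMod 2) ℂ) :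
    tens (fun i => c i • M i) = (∏ i, c i) • tens M := by
  ext f g
  simp [tens, Finset.prod_mul_distrib]

theorem Zstr_mul_Xstr (S T : Finset (Fin n)) :
    Zstr T * Xstr S = (-1 : ℂ) ^ #(S ∩ T) • (Xstr S * Zstr T) := by
  have hsign : ∀ i, (if i ∈ T then Z else 1) * (if i ∈ S then X else 1) =
      (if i ∈ S ∩ T then -1 else 1 : ℂ) •
        ((if i ∈ S then X else 1) * (if i ∈ T then Z else 1)) := by
    intro i
    by_cases hS : i ∈ S <;> by_cases hT : i ∈ T <;> simp [hS, hT, Z_mul_X]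
  rw [Xstr, Zstr, tens_mul, tens_mul, funext hsign, tens_smul, Finset.prod_ite_mem,
    Finset.univ_inter, Finset.prod_const]

theorem Xstr_mul_Zstr_of_even {S T : Finset (Fin n)} (h : Even #(S ∩ T)) :
    Xstr S * Zstr T = Zstr T * Xstr S := by
  rw [Zstr_mul_Xstr, h.neg_one_pow, one_smul]

theorem Xstr_mul_Zstr_of_odd {S T : Finset (Fin n)} (h : Odd #(S ∩ T)) :
    Xstr S * Zstr T = -(Zstr T * Xstr S) := by
  rw [Zstr_mul_Xstr, h.neg_one_pow, neg_one_smul, neg_neg]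

end PauliStrings

end FQ

namespace Finset

theorem card_symmDiff_add_two_mul_card_inter {α : Type*} [DecidableEq α]
    (A B : Finset α) : #(A ∆ B) + 2 * #(A ∩ B) = #A + #B := by
  have hsub : #(A ∩ B) ≤ #(A ∪ B) := card_le_card inter_subset_union
  rw [symmDiff_eq_sup_sdiff_inf, sup_eq_union, inf_eq_inter,
    card_sdiff_of_subset inter_subset_union, ← card_union_add_card_inter A B]
  omega

theorem natCast_card_symmDiff {α : Type*} [DecidableEq α] (A B : Finset α) :
    (#(A ∆ B) : ZMod 2) = #A + #B := by
  have h := congrArg (Nat.cast : ℕ → ZMod 2) (card_symmDiff_add_two_mul_card_inter A B)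
  push_cast at h
  rwa [show (2 : ZMod 2) = 0 from rfl, zero_mul, add_zero] at h

end Finset

namespace FQ

section Parity

variable {n : ℕ} (U F : Matrix (Fin n) (Fin n) (ZMod 2))

theorem natCast_card_colSet_inter_rowSet (i j : Fin n) :
    (#(colSet U i ∩ rowSet F j) : ZMod 2) = (F * U) j i := by
  have hmul : ∀ a b : ZMod 2, a * b = if a = 1 ∧ b = 1 then 1 else 0 := by decide
  simp only [Matrix.mul_apply, hmul, Finset.sum_boole, colSet, rowSet, ← Finset.filter_and,
    and_comm]

theorem Rset_eq_Pset_succ (m : ℕ) : Rset F m = Pset F (m + 1) := rfl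

variable {U F}

theorem natCast_card_colSet_inter_Pset (hFU : F * U = 1) (i : Fin n) {m : ℕ} (hm : m ≤ n) :
    (#(colSet U i ∩ Pset F m) : ZMod 2) = if (i : ℕ) < m then 1 else 0 := by
  induction m with
  | zero => simp [Pset]
  | succ m ih =>
    have hmn : m < n := hm
    have hstep : colSet U i ∩ Pset F (m + 1) =
        (colSet U i ∩ Pset F m) ∆ (colSet U i ∩ rowSet F ⟨m, hmn⟩) := by
      rw [Pset, rowSetN, dif_pos hmn]
      exact inf_symmDiff_distrib_left _ _ _
    rw [hstep, natCast_card_symmDiff, ih (by omega), natCast_card_colSet_inter_rowSet, hFU,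
      Matrix.one_apply]
    simp only [Fin.ext_iff]
    rcases lt_trichotomy (i : ℕ) m with h | h | h
    · simp [h, h.ne', show (i : ℕ) < m + 1 by omega]
    · simp [h]
    · simp [h.ne, show ¬(i : ℕ) < m by omega, show ¬(i : ℕ) < m + 1 by omega]

end Parity

theorem linear_encoding_parity_commutation_general (n : ℕ)
    (U : Matrix (Fin n) (Fin n) (ZMod 2)) (hU : IsUnit U) :
    ∀ i : Fin n,
      Even ((colSet U i ∩ Pset U⁻¹ (i : ℕ)).card) ∧
      Odd ((colSet U i ∩ Rset U⁻¹ (i : ℕ)).card) ∧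
      Xstr (colSet U i) * Zstr (Pset U⁻¹ (i : ℕ)) =
        Zstr (Pset U⁻¹ (i : ℕ)) * Xstr (colSet U i) ∧
      Xstr (colSet U i) * Zstr (Rset U⁻¹ (i : ℕ)) =
        -(Zstr (Rset U⁻¹ (i : ℕ)) * Xstr (colSet U i)) := by
  intro i
  have hFU : U⁻¹ * U = 1 := Matrix.nonsing_inv_mul U ((Matrix.isUnit_iff_isUnit_det U).mp hU)
  have hP : Even #(colSet U i ∩ Pset U⁻¹ i) := by
    rw [← ZMod.natCast_eq_zero_iff_even, natCast_card_colSet_inter_Pset hFU i i.is_lt.le]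
    simp
  have hR : Odd #(colSet U i ∩ Rset U⁻¹ i) := by
    rw [← ZMod.natCast_eq_one_iff_odd, Rset_eq_Pset_succ,
      natCast_card_colSet_inter_Pset hFU i i.is_lt]
    simp
  exact ⟨hP, hR, Xstr_mul_Zstr_of_even hP, Xstr_mul_Zstr_of_odd hR⟩

/-- for a linear encoding `U ∈ GL_n(𝔽₂)` with `F = U⁻¹`,
`P(i) = F(0) △ ⋯ △ F(i−1)` and `R(i) = P(i) △ F(i)`, the intersection `U(i) ∩ P(i)` has even
cardinality and `U(i) ∩ R(i)` has odd cardinality; consequently `X_{U(i)}` commutes with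
`Z_{P(i)}` and anticommutes with `Z_{R(i)}`. -/
theorem linear_encoding_parity_commutation (n : ℕ) (hn : 1 ≤ n)
    (U : Matrix (Fin n) (Fin n) (ZMod 2)) (hU : IsUnit U) :
    ∀ i : Fin n,
      Even ((colSet U i ∩ Pset U⁻¹ (i : ℕ)).card) ∧
      Odd ((colSet U i ∩ Rset U⁻¹ (i : ℕ)).card) ∧
      Xstr (colSet U i) * Zstr (Pset U⁻¹ (i : ℕ)) =
        Zstr (Pset U⁻¹ (i : ℕ)) * Xstr (colSet U i) ∧
      Xstr (colSet U i) * Zstr (Rset U⁻¹ (i : ℕ)) =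
        -(Zstr (Rset U⁻¹ (i : ℕ)) * Xstr (colSet U i)) :=
  linear_encoding_parity_commutation_general n U hU

end FQ
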